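/- arXiv:2203.02531 — 4 statements merged into one kernel-verified Lean document; each statement's English description precedes it below -/
import Mathlib

section
/- Let d be a quasi-metric on a set Ω with quasi-metric constant κ (i.e., d is symmetric, nonnegative, and d(x,y) ≤ κ(d(x,z)+d(z,y)) for all x,y,z). Then for all x₀, x, y, z ∈ Ω, Ptolemy's inequality holds: d(x,y)·d(x₀,z) ≤ 4κ²[d(x,z)·d(y,x₀) + d(x₀,x)·d(z,y)]. -/
open scoped ENNReal

private lemma ptolemy_add4 (u v : ℝ≥0∞) : u + (v + v + v) ≤ 4 * (u + v) := by
  calc u + (v + v + v) ≤ (u + v) + ((u + v) + (u + v) + (u + v)) :=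
        add_le_add le_self_add
          (add_le_add (add_le_add le_add_self le_add_self) le_add_self)
  _ = 4 * (u + v) := by ring

private lemma ptolemy_aux0 (κ a b c e X Y : ℝ≥0∞)
    (hab : a ≤ b) (hce : c ≤ e)
    (h1 : X ≤ κ * (a + c)) (h4 : Y ≤ κ * (b + c)) (h3 : Y ≤ κ * (e + a)) :
    X * Y ≤ 4 * κ ^ 2 * (a * b + e * c) := by
  rcases le_total b e with h | h
  · -- b ≤ e; use X ≤ κ(a+c), Y ≤ κ(b+c)
    have t1 : a * c ≤ e * c := mul_le_mul' (hab.trans h) le_rfl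
    have t2 : c * b ≤ e * c := by rw [mul_comm c b]; exact mul_le_mul' h le_rfl
    have t3 : c * c ≤ e * c := mul_le_mul' hce le_rfl
    have key : (a + c) * (b + c) ≤ 4 * (a * b + e * c) := by
      calc (a + c) * (b + c) = a * b + (a * c + c * b + c * c) := by ring
      _ ≤ a * b + (e * c + e * c + e * c) :=
          add_le_add le_rfl (add_le_add (add_le_add t1 t2) t3)
      _ ≤ 4 * (a * b + e * c) := ptolemy_add4 _ _
    calc X * Y ≤ (κ * (a + c)) * (κ * (b + c)) := mul_le_mul' h1 h4
    _ = κ ^ 2 * ((a + c) * (b + c)) := by ring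
    _ ≤ κ ^ 2 * (4 * (a * b + e * c)) := mul_le_mul' le_rfl key
    _ = 4 * κ ^ 2 * (a * b + e * c) := by ring
  · -- e ≤ b; use X ≤ κ(a+c), Y ≤ κ(e+a)
    have t1 : a * e ≤ a * b := mul_le_mul' le_rfl h
    have t2 : a * a ≤ a * b := mul_le_mul' le_rfl hab
    have t3 : c * a ≤ a * b := by
      rw [mul_comm c a]; exact mul_le_mul' le_rfl (hce.trans h)
    have key : (a + c) * (e + a) ≤ 4 * (e * c + a * b) := by
      calc (a + c) * (e + a) = e * c + (a * e + a * a + c * a) := by ring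
      _ ≤ e * c + (a * b + a * b + a * b) :=
          add_le_add le_rfl (add_le_add (add_le_add t1 t2) t3)
      _ ≤ 4 * (e * c + a * b) := ptolemy_add4 _ _
    calc X * Y ≤ (κ * (a + c)) * (κ * (e + a)) := mul_le_mul' h1 h3
    _ = κ ^ 2 * ((a + c) * (e + a)) := by ring
    _ ≤ κ ^ 2 * (4 * (e * c + a * b)) := mul_le_mul' le_rfl key
    _ = 4 * κ ^ 2 * (a * b + e * c) := by ring

private lemma ptolemy_aux (κ a b c e X Y : ℝ≥0∞)
    (h1 : X ≤ κ * (a + c)) (h2 : X ≤ κ * (e + b))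
    (h3 : Y ≤ κ * (e + a)) (h4 : Y ≤ κ * (b + c)) :
    X * Y ≤ 4 * κ ^ 2 * (a * b + e * c) := by
  rcases le_total a b with hab | hba <;> rcases le_total c e with hce | hec
  · exact ptolemy_aux0 κ a b c e X Y hab hce h1 h4 h3
  · have := ptolemy_aux0 κ a b e c Y X hab hec
      (by rwa [add_comm e a] at h3) (by rwa [add_comm e b] at h2)
      (by rwa [add_comm a c] at h1)
    calc X * Y = Y * X := mul_comm _ _
    _ ≤ 4 * κ ^ 2 * (a * b + c * e) := this
    _ = 4 * κ ^ 2 * (a * b + e * c) := by rw [mul_comm c e]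
  · have := ptolemy_aux0 κ b a c e Y X hba hce h4 h1 h2
    calc X * Y = Y * X := mul_comm _ _
    _ ≤ 4 * κ ^ 2 * (b * a + e * c) := this
    _ = 4 * κ ^ 2 * (a * b + e * c) := by rw [mul_comm b a]
  · have := ptolemy_aux0 κ b a e c X Y hba hec
      (by rwa [add_comm e b] at h2) (by rwa [add_comm e a] at h3)
      (by rwa [add_comm b c] at h4)
    calc X * Y ≤ 4 * κ ^ 2 * (b * a + c * e) := this
    _ = 4 * κ ^ 2 * (a * b + e * c) := by rw [mul_comm b a, mul_comm c e]

/-- Ptolemy's inequality for quasi-metrics. -/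
theorem ptolemy_inequality {Ω : Type*} [Nonempty Ω]
    (d : Ω → Ω → ℝ≥0∞) (κ : ℝ≥0∞) (hκ : 1 / 2 ≤ κ)
    (hsym : ∀ x y, d x y = d y x)
    (htri : ∀ x y z, d x y ≤ κ * (d x z + d z y)) :
    ∀ x₀ x y z : Ω,
      d x y * d x₀ z ≤ 4 * κ ^ 2 * (d x z * d y x₀ + d x₀ x * d z y) := by
  intro x₀ x y z
  refine ptolemy_aux κ (d x z) (d y x₀) (d z y) (d x₀ x) (d x y) (d x₀ z)
    (htri x y z) ?_ (htri x₀ z x) ?_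
  · have := htri x y x₀
    rwa [hsym x x₀, hsym x₀ y] at this
  · have := htri x₀ z y
    rwa [hsym x₀ y, hsym y z] at this
end

section
/- Let G be a quasi-metric kernel on Ω (symmetric, positive, with d = 1/G satisfying the quasi-triangle inequality with constant κ). Fix x₀ ∈ Ω and set g(x) = min{1, G(x,x₀)}. Then the modified kernel G̃(x,y) = G(x,y)/(g(x)g(y)) is again a quasi-metric kernel with quasi-metric constant 4κ². -/
open scoped ENNReal

/-!
Write `d = G⁻¹` and `m x = max 1 (d x x₀) = (min 1 (G x x₀))⁻¹`; clearing denominators, the claim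
becomes `d x y * m z ≤ 4 κ² (d x z * m y + d z y * m x)`. Say `m y ≤ m x`. Going through `y`,
`m z ≤ 2κ max (d z y) (m y)`. If `m z ≤ 2κ m y`, the quasi-triangle inequality through `z` suffices;
otherwise `m z ≤ 2κ d z y`, while `d x y ≤ 2κ m x` by going through `x₀`.
If `2κ < 1`, the quasi-triangle inequality forces `d = 0`.
-/

namespace ENNReal

theorem min_one_eq_inv_max_one_inv (t : ℝ≥0∞) : min 1 t = (max 1 t⁻¹)⁻¹ := by
  rw [inv_strictAnti.antitone.map_max, inv_one, inv_inv]

theorem eq_zero_of_le_mul_of_lt_one {a c : ℝ≥0∞} (ha : a ≠ ⊤) (hc : c < 1) (h : a ≤ c * a) :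
    a = 0 := by
  by_contra h0
  exact (h.trans_lt (by simpa using ENNReal.mul_lt_mul_left h0 ha hc)).false

theorem le_two_mul_mul_max_of_le_mul_add {a b c κ : ℝ≥0∞} (h : a ≤ κ * (b + c)) :
    a ≤ 2 * κ * max b c := by
  calc a ≤ κ * (max b c + max b c) := h.trans (by gcongr <;> simp)
    _ = 2 * κ * max b c := by ring

theorem inv_mul_inv_mul_le_of_mul_le {a b c p q r K : ℝ≥0∞} (ha : a ≠ 0) (ha' : a ≠ ⊤)
    (hb : b ≠ 0) (hb' : b ≠ ⊤) (hc : c ≠ 0) (hc' : c ≠ ⊤)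
    (h : p * c ≤ K * (q * b + r * a)) :
    a⁻¹ * b⁻¹ * p ≤ K * (a⁻¹ * c⁻¹ * q + c⁻¹ * b⁻¹ * r) :=
  calc a⁻¹ * b⁻¹ * p = a⁻¹ * b⁻¹ * c⁻¹ * (p * c) := by
        rw [mul_comm p, ← mul_assoc, mul_assoc _ c⁻¹, ENNReal.inv_mul_cancel hc hc', mul_one]
    _ ≤ a⁻¹ * b⁻¹ * c⁻¹ * (K * (q * b + r * a)) := by gcongr
    _ = K * (a⁻¹ * c⁻¹ * q * (b⁻¹ * b) + c⁻¹ * b⁻¹ * r * (a⁻¹ * a)) := by ring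
    _ = K * (a⁻¹ * c⁻¹ * q + c⁻¹ * b⁻¹ * r) := by
        rw [ENNReal.inv_mul_cancel hb hb', ENNReal.inv_mul_cancel ha ha', mul_one, mul_one]

end ENNReal

namespace QuasiTriangle

variable {Ω : Type*} {d : Ω → Ω → ℝ≥0∞} {κ : ℝ≥0∞}

theorem eq_zero_of_two_mul_lt_one (hfin : ∀ x y, d x y ≠ ⊤)
    (htri : ∀ x y z, d x y ≤ κ * (d x z + d z y)) (hκ : 2 * κ < 1) (x y : Ω) : d x y = 0 := by
  have hκ1 : κ < 1 := (le_mul_of_one_le_left' one_le_two).trans_lt hκ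
  have hyy : d y y = 0 :=
    ENNReal.eq_zero_of_le_mul_of_lt_one (hfin y y) hκ ((htri y y y).trans_eq (by ring))
  exact ENNReal.eq_zero_of_le_mul_of_lt_one (hfin x y) hκ1 (by simpa [hyy] using htri x y y)

theorem max_one_le_two_mul_mul_max (htri : ∀ x y z, d x y ≤ κ * (d x z + d z y))
    (hκ : 1 ≤ 2 * κ) (x₀ y z : Ω) :
    max 1 (d z x₀) ≤ 2 * κ * max (d z y) (max 1 (d y x₀)) := by
  refine max_le (hκ.trans (le_mul_of_one_le_right' ?_)) ?_
  · exact le_max_of_le_right (le_max_left _ _)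
  · exact ENNReal.le_two_mul_mul_max_of_le_mul_add
      ((htri z x₀ y).trans (by gcongr; exact le_max_right _ _))

theorem le_two_mul_mul_max_max_one (hsym : ∀ x y, d x y = d y x)
    (htri : ∀ x y z, d x y ≤ κ * (d x z + d z y)) (x₀ x y : Ω) :
    d x y ≤ 2 * κ * max (max 1 (d x x₀)) (max 1 (d y x₀)) := by
  refine ENNReal.le_two_mul_mul_max_of_le_mul_add ((htri x y x₀).trans ?_)
  rw [hsym x₀ y]
  gcongr <;> exact le_max_right _ _

theorem mul_max_one_le_of_max_one_le (hsym : ∀ x y, d x y = d y x)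
    (htri : ∀ x y z, d x y ≤ κ * (d x z + d z y)) (hκ : 1 ≤ 2 * κ) {x₀ x y : Ω}
    (hxy : max 1 (d y x₀) ≤ max 1 (d x x₀)) (z : Ω) :
    d x y * max 1 (d z x₀) ≤
      4 * κ ^ 2 * (d x z * max 1 (d y x₀) + d z y * max 1 (d x x₀)) := by
  have hz := max_one_le_two_mul_mul_max htri hκ x₀ y z
  rcases le_total (d z y) (max 1 (d y x₀)) with hzy | hzy
  · rw [max_eq_right hzy] at hz
    calc d x y * max 1 (d z x₀)
        ≤ κ * (d x z + d z y) * max 1 (d z x₀) := by gcongr; exact htri x y z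
      _ = κ * d x z * max 1 (d z x₀) + κ * d z y * max 1 (d z x₀) := by ring
      _ ≤ κ * d x z * (2 * κ * max 1 (d y x₀)) + κ * d z y * (2 * κ * max 1 (d x x₀)) := by
          gcongr; exact hz.trans (by gcongr)
      _ = 2 * κ ^ 2 * (d x z * max 1 (d y x₀) + d z y * max 1 (d x x₀)) := by ring
      _ ≤ 4 * κ ^ 2 * (d x z * max 1 (d y x₀) + d z y * max 1 (d x x₀)) := by
          gcongr; norm_num
  · rw [max_eq_left hzy] at hz
    have hxy' := le_two_mul_mul_max_max_one hsym htri x₀ x y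
    rw [max_eq_left hxy] at hxy'
    calc d x y * max 1 (d z x₀) ≤ 2 * κ * max 1 (d x x₀) * (2 * κ * d z y) := by gcongr
      _ = 4 * κ ^ 2 * (d z y * max 1 (d x x₀)) := by ring
      _ ≤ 4 * κ ^ 2 * (d x z * max 1 (d y x₀) + d z y * max 1 (d x x₀)) := by
          gcongr; exact le_add_self

theorem mul_max_one_le (hsym : ∀ x y, d x y = d y x)
    (htri : ∀ x y z, d x y ≤ κ * (d x z + d z y)) (hκ : 1 ≤ 2 * κ) (x₀ x y z : Ω) :
    d x y * max 1 (d z x₀) ≤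
      4 * κ ^ 2 * (d x z * max 1 (d y x₀) + d z y * max 1 (d x x₀)) := by
  rcases le_total (max 1 (d y x₀)) (max 1 (d x x₀)) with hxy | hyx
  · exact mul_max_one_le_of_max_one_le hsym htri hκ hxy z
  · have h := mul_max_one_le_of_max_one_le hsym htri hκ hyx z
    rwa [hsym y x, hsym y z, hsym z x, add_comm] at h

end QuasiTriangle

/-- If `G` is a quasi-metric kernel with constant `κ` and `g x = min 1 (G x x₀)`,
then the modified kernel `G̃ x y = G x y / (g x * g y)` is quasi-metric with
constant `4 κ ^ 2`, i.e. `d̃ x y = g x * g y / G x y` satisfies the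
quasi-triangle inequality with constant `4 κ ^ 2`. -/
theorem modified_kernel_quasimetric {Ω : Type*}
    (G : Ω → Ω → ℝ≥0∞) (κ : ℝ≥0∞)
    (hpos : ∀ x y, 0 < G x y)
    (hsym : ∀ x y, G x y = G y x)
    (htri : ∀ x y z, (G x y)⁻¹ ≤ κ * ((G x z)⁻¹ + (G z y)⁻¹))
    (x₀ : Ω) :
    ∀ x y z : Ω,
      min 1 (G x x₀) * min 1 (G y x₀) / G x y ≤
        4 * κ ^ 2 *
          (min 1 (G x x₀) * min 1 (G z x₀) / G x z +
            min 1 (G z x₀) * min 1 (G y x₀) / G z y) := by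
  intro x y z
  have hfin : ∀ p q, (G p q)⁻¹ ≠ ⊤ := fun p q => ENNReal.inv_ne_top.mpr (hpos p q).ne'
  simp only [div_eq_mul_inv, ENNReal.min_one_eq_inv_max_one_inv]
  rcases lt_or_ge (2 * κ) 1 with hκ | hκ
  · have hxy : (G x y)⁻¹ = 0 := QuasiTriangle.eq_zero_of_two_mul_lt_one hfin htri hκ x y
    rw [hxy, mul_zero]
    exact zero_le
  · have hne_zero : ∀ p, max 1 (G p x₀)⁻¹ ≠ 0 := fun p => (one_pos.trans_le (le_max_left _ _)).ne'
    have hne_top : ∀ p, max 1 (G p x₀)⁻¹ ≠ ⊤ := fun p => max_ne_top ENNReal.one_ne_top (hfin p x₀)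
    exact ENNReal.inv_mul_inv_mul_le_of_mul_le (hne_zero x) (hne_top x) (hne_zero y) (hne_top y)
      (hne_zero z) (hne_top z)
      (QuasiTriangle.mul_max_one_le (d := fun p q => (G p q)⁻¹) (fun p q => by rw [hsym]) htri hκ
        x₀ x y z)
end

section
/- Let G be a quasi-metric kernel on a locally compact Hausdorff space Ω with quasi-metric constant κ. Then G satisfies the weak maximum principle with constant 2κ: for any compactly supported Radon measure μ ∈ M⁺(Ω), if Gμ(x) ≤ 1 for all x in the support of μ, then Gμ(x) ≤ 2κ for all x ∈ Ω. -/
open MeasureTheory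
open scoped ENNReal

/-- The (closed) support of a measure: points all of whose neighborhoods have
positive measure. -/
def msupport {Ω : Type*} [TopologicalSpace Ω] [MeasurableSpace Ω] (μ : Measure Ω) : Set Ω :=
  {x | ∀ U ∈ nhds x, 0 < μ U}

/-!
Fix `x` and write `d = G⁻¹`. Given `ε > 0`, pick `z` in the support with `d x z ≤ d x y + ε` for
every `y` in the support. The quasi-triangle inequality through `x` gives
`d z y ≤ κ (2 d x y + ε)` there, hence `∫ (κ (2 d x y + ε))⁻¹ dμ(y) ≤ Gμ(z) ≤ 1`. Letting `ε → 0`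
by Fatou's lemma yields `Gμ(x) / (2κ) ≤ 1`.
-/

open Filter Topology

theorem ENNReal.exists_mem_forall_le_add {α : Type*} {s : Set α} (hs : s.Nonempty)
    (f : α → ℝ≥0∞) {ε : ℝ≥0∞} (hε : ε ≠ 0) : ∃ z ∈ s, ∀ y ∈ s, f z ≤ f y + ε := by
  obtain ⟨z₀, hz₀⟩ := hs
  rcases eq_or_ne (sInf (f '' s)) ∞ with htop | hfin
  · refine ⟨z₀, hz₀, fun y hy => ?_⟩
    rw [sInf_eq_top.1 htop _ (Set.mem_image_of_mem f hy), top_add]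
    exact le_top
  · obtain ⟨_, ⟨z, hz, rfl⟩, hlt⟩ := sInf_lt_iff.1 (ENNReal.lt_add_right hfin hε)
    exact ⟨z, hz, fun y hy => hlt.le.trans (by gcongr; exact sInf_le (Set.mem_image_of_mem f hy))⟩

theorem ENNReal.div_le_inv_mul_inv (a b : ℝ≥0∞) : a / b ≤ (b * a⁻¹)⁻¹ := by
  rw [ENNReal.le_inv_iff_mul_le, div_eq_mul_inv,
    show a * b⁻¹ * (b * a⁻¹) = a * a⁻¹ * (b * b⁻¹) by ring]
  exact mul_le_one' (ENNReal.mul_inv_le_one a) (ENNReal.mul_inv_le_one b)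

theorem ENNReal.tendsto_inv_mul_add_inv_nat {κ : ℝ≥0∞} (hκ : κ ≠ ∞) (a : ℝ≥0∞) :
    Tendsto (fun n : ℕ => (κ * (a + (n : ℝ≥0∞)⁻¹))⁻¹) atTop (𝓝 (κ * a)⁻¹) := by
  refine tendsto_inv_iff.2 (ENNReal.Tendsto.const_mul ?_ (Or.inr hκ))
  simpa using tendsto_const_nhds.add ENNReal.tendsto_inv_nat_nhds_zero

theorem MeasureTheory.lintegral_le_of_tendsto {α : Type*} [MeasurableSpace α] {μ : Measure α}
    {f : ℕ → α → ℝ≥0∞} {g : α → ℝ≥0∞} {c : ℝ≥0∞} (hf : ∀ n, AEMeasurable (f n) μ)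
    (hlim : ∀ a, Tendsto (fun n => f n a) atTop (𝓝 (g a))) (hle : ∀ n, ∫⁻ a, f n a ∂μ ≤ c) :
    ∫⁻ a, g a ∂μ ≤ c :=
  calc ∫⁻ a, g a ∂μ = ∫⁻ a, liminf (fun n => f n a) atTop ∂μ := by
        simp_rw [(hlim _).liminf_eq]
    _ ≤ liminf (fun n => ∫⁻ a, f n a ∂μ) atTop := lintegral_liminf_le' hf
    _ ≤ c := liminf_le_of_frequently_le' (Frequently.of_forall hle)

section QuasiMetricKernel

variable {Ω : Type*} {G : Ω → Ω → ℝ≥0∞} {κ : ℝ≥0∞}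

theorem inv_mul_two_mul_add_le_of_le_add (hsym : ∀ x y, G x y = G y x)
    (htri : ∀ x y z, (G x y)⁻¹ ≤ κ * ((G x z)⁻¹ + (G z y)⁻¹)) {x y z : Ω} {ε : ℝ≥0∞}
    (hz : (G x z)⁻¹ ≤ (G x y)⁻¹ + ε) : (κ * (2 * (G x y)⁻¹ + ε))⁻¹ ≤ G z y := by
  rw [ENNReal.inv_le_iff_inv_le]
  calc (G z y)⁻¹ ≤ κ * ((G x z)⁻¹ + (G x y)⁻¹) := hsym z x ▸ htri z y x
    _ ≤ κ * ((G x y)⁻¹ + ε + (G x y)⁻¹) := by gcongr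
    _ = κ * (2 * (G x y)⁻¹ + ε) := by ring

variable [MeasurableSpace Ω] {μ : Measure Ω} {s : Set Ω}

theorem lintegral_inv_mul_two_mul_add_le_one (hsym : ∀ x y, G x y = G y x)
    (htri : ∀ x y z, (G x y)⁻¹ ≤ κ * ((G x z)⁻¹ + (G z y)⁻¹)) (hs : μ sᶜ = 0)
    (hle : ∀ z ∈ s, ∫⁻ y, G z y ∂μ ≤ 1) (x : Ω) {ε : ℝ≥0∞} (hε : ε ≠ 0) :
    ∫⁻ y, (κ * (2 * (G x y)⁻¹ + ε))⁻¹ ∂μ ≤ 1 := by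
  rcases s.eq_empty_or_nonempty with rfl | hne
  · simp [Measure.measure_univ_eq_zero.1 (by simpa using hs)]
  obtain ⟨z, hz, hnear⟩ := ENNReal.exists_mem_forall_le_add hne (fun y => (G x y)⁻¹) hε
  calc ∫⁻ y, (κ * (2 * (G x y)⁻¹ + ε))⁻¹ ∂μ ≤ ∫⁻ y, G z y ∂μ :=
        lintegral_mono_ae <| (measure_eq_zero_iff_ae_notMem.1 hs).mono fun y hy =>
          inv_mul_two_mul_add_le_of_le_add hsym htri (hnear y (not_not.1 hy))
    _ ≤ 1 := hle z hz

theorem lintegral_le_two_mul_of_le_one_on (hsym : ∀ x y, G x y = G y x)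
    (htri : ∀ x y z, (G x y)⁻¹ ≤ κ * ((G x z)⁻¹ + (G z y)⁻¹)) (hmeas : ∀ x, Measurable (G x))
    (hs : μ sᶜ = 0) (hle : ∀ z ∈ s, ∫⁻ y, G z y ∂μ ≤ 1) (x : Ω) :
    ∫⁻ y, G x y ∂μ ≤ 2 * κ := by
  rcases eq_or_ne κ ∞ with rfl | hκ
  · simp
  have hlim : ∫⁻ y, (κ * (2 * (G x y)⁻¹))⁻¹ ∂μ ≤ 1 :=
    lintegral_le_of_tendsto (fun n => by fun_prop)
      (fun y => ENNReal.tendsto_inv_mul_add_inv_nat hκ _)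
      (fun n => lintegral_inv_mul_two_mul_add_le_one hsym htri hs hle x (by simp))
  suffices (∫⁻ y, G x y ∂μ) / (2 * κ) ≤ 1 by
    simpa using (ENNReal.div_le_iff_le_mul (Or.inr ENNReal.one_ne_top) (Or.inr one_ne_zero)).1 this
  rw [div_eq_mul_inv, ← lintegral_mul_const'' _ (hmeas x).aemeasurable]
  refine (lintegral_mono fun y => ?_).trans hlim
  rw [← div_eq_mul_inv, ← mul_assoc, mul_comm κ]
  exact ENNReal.div_le_inv_mul_inv _ _

end QuasiMetricKernel

theorem quasimetric_kernel_WMP_general {Ω : Type*} [TopologicalSpace Ω]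
    [MeasurableSpace Ω] [BorelSpace Ω]
    [SecondCountableTopology Ω]
    (G : Ω → Ω → ℝ≥0∞) (κ : ℝ≥0∞)
    (hlsc : LowerSemicontinuous fun p : Ω × Ω => G p.1 p.2)
    (hsym : ∀ x y, G x y = G y x)
    (htri : ∀ x y z, (G x y)⁻¹ ≤ κ * ((G x z)⁻¹ + (G z y)⁻¹))
    (μ : Measure Ω)
    (hsupp : μ (msupport μ)ᶜ = 0)
    (hle : ∀ x ∈ msupport μ, ∫⁻ y, G x y ∂μ ≤ 1) :
    ∀ x : Ω, ∫⁻ y, G x y ∂μ ≤ 2 * κ :=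
  lintegral_le_two_mul_of_le_one_on hsym htri
    (fun x => hlsc.measurable.comp measurable_prodMk_left) hsupp hle

/-- A quasi-metric kernel with quasi-metric constant `κ` satisfies the weak
maximum principle with constant `2κ`: if `Gμ ≤ 1` on the support of a compactly
supported Radon measure `μ`, then `Gμ ≤ 2κ` everywhere. -/
theorem quasimetric_kernel_WMP {Ω : Type*} [TopologicalSpace Ω]
    [MeasurableSpace Ω] [BorelSpace Ω] [LocallyCompactSpace Ω] [T2Space Ω]
    [SecondCountableTopology Ω]
    (G : Ω → Ω → ℝ≥0∞) (κ : ℝ≥0∞)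
    (hlsc : LowerSemicontinuous fun p : Ω × Ω => G p.1 p.2)
    (hpos : ∀ x y, 0 < G x y)
    (hsym : ∀ x y, G x y = G y x)
    (htri : ∀ x y z, (G x y)⁻¹ ≤ κ * ((G x z)⁻¹ + (G z y)⁻¹))
    (μ : Measure Ω) [IsFiniteMeasure μ]
    (hcpt : IsCompact (msupport μ))
    (hsupp : μ (msupport μ)ᶜ = 0)
    (hle : ∀ x ∈ msupport μ, ∫⁻ y, G x y ∂μ ≤ 1) :
    ∀ x : Ω, ∫⁻ y, G x y ∂μ ≤ 2 * κ :=
  quasimetric_kernel_WMP_general G κ hlsc hsym htri μ hsupp hle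
end

section
/- Let 0 < q < 1 and a ∈ (0,1]. Suppose u₁, u₂ : Ω → (0,∞) are solutions of u = G(u^q dσ) + f σ-a.e. satisfying a·u₁ ≤ u₂ ≤ a^{-1}·u₁ σ-a.e. Then u₁ = u₂ σ-a.e. -/
open MeasureTheory Filter
open scoped ENNReal NNReal Topology

private lemma tendsto_rpow_pow_zero {c : ℝ≥0∞} (hc0 : c ≠ 0) (hct : c ≠ ⊤)
    {q : ℝ} (hq0 : 0 ≤ q) (hq1 : q < 1) :
    Tendsto (fun j : ℕ => c ^ (q ^ j)) atTop (𝓝 (1:ℝ≥0∞)) := by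
  lift c to ℝ≥0 using hct
  have hc0' : c ≠ 0 := by exact_mod_cast hc0
  have hql : Tendsto (fun j : ℕ => q ^ j) atTop (𝓝 0) :=
    tendsto_pow_atTop_nhds_zero_of_lt_one hq0 hq1
  have : Tendsto (fun j : ℕ => c ^ (q ^ j)) atTop (𝓝 (c ^ (0:ℝ))) :=
    Filter.Tendsto.nnrpow tendsto_const_nhds hql (Or.inl hc0')
  rw [NNReal.rpow_zero] at this
  have := (ENNReal.tendsto_coe (α := ℕ)).mpr this
  simpa [ENNReal.coe_rpow_of_ne_zero hc0'] using this

/-- Uniqueness via iteration: if `u₁, u₂` are solutions of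
`u = G(u^q dσ) + f` σ-a.e. with `0 < q < 1` and `a u₁ ≤ u₂ ≤ a⁻¹ u₁` σ-a.e.
for some `a ∈ (0,1]`, then `u₁ = u₂` σ-a.e. -/
theorem uniqueness_by_iteration {Ω : Type*} [MeasurableSpace Ω]
    (σ : Measure Ω) (G : Ω → Ω → ℝ≥0∞) (f : Ω → ℝ≥0∞)
    (q : ℝ) (hq : 0 < q ∧ q < 1)
    (a : ℝ≥0∞) (ha : 0 < a ∧ a ≤ 1)
    (u₁ u₂ : Ω → ℝ≥0∞)
    (hpos₁ : ∀ᵐ x ∂σ, 0 < u₁ x ∧ u₁ x < ⊤)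
    (hpos₂ : ∀ᵐ x ∂σ, 0 < u₂ x ∧ u₂ x < ⊤)
    (hsol₁ : ∀ᵐ x ∂σ, u₁ x = (∫⁻ y, G x y * u₁ y ^ q ∂σ) + f x)
    (hsol₂ : ∀ᵐ x ∂σ, u₂ x = (∫⁻ y, G x y * u₂ y ^ q ∂σ) + f x)
    (hcomp : ∀ᵐ x ∂σ, a * u₁ x ≤ u₂ x ∧ u₂ x ≤ a⁻¹ * u₁ x) :
    u₁ =ᵐ[σ] u₂ := by
  obtain ⟨hq0, hq1⟩ := hq
  obtain ⟨ha0, ha1⟩ := ha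
  have ha0' : a ≠ 0 := ha0.ne'
  have hat : a ≠ ⊤ := (ha1.trans_lt ENNReal.one_lt_top).ne
  have hait : a⁻¹ ≠ ⊤ := by simp [ha0']
  have hai0 : a⁻¹ ≠ 0 := by simp [hat]
  -- step lemmas
  have lower : ∀ c : ℝ≥0∞, c ≤ 1 → (∀ᵐ x ∂σ, c * u₁ x ≤ u₂ x) →
      ∀ᵐ x ∂σ, c ^ q * u₁ x ≤ u₂ x := by
    intro c hc1 h
    have hcq1 : c ^ q ≤ 1 := ENNReal.rpow_le_one hc1 hq0.le
    have hint : ∀ᵐ x ∂σ, (∫⁻ y, G x y * (c * u₁ y) ^ q ∂σ) ≤ ∫⁻ y, G x y * u₂ y ^ q ∂σ := by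
      filter_upwards with x
      refine lintegral_mono_ae ?_
      filter_upwards [h] with y hy
      exact mul_le_mul_right (ENNReal.rpow_le_rpow hy hq0.le) _
    filter_upwards [hsol₁, hsol₂, hint] with x h1 h2 hI
    have key : (∫⁻ y, G x y * (c * u₁ y) ^ q ∂σ) = c ^ q * ∫⁻ y, G x y * u₁ y ^ q ∂σ := by
      rw [← lintegral_const_mul' _ _ (by simp [ENNReal.rpow_eq_top_iff, hc1.trans_lt ENNReal.one_lt_top |>.ne, hq0, hq0.not_gt] : c ^ q ≠ ⊤)]
      congr 1; ext y
      rw [ENNReal.mul_rpow_of_nonneg _ _ hq0.le]; ring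
    calc c ^ q * u₁ x = c ^ q * ((∫⁻ y, G x y * u₁ y ^ q ∂σ) + f x) := by rw [h1]
      _ = c ^ q * (∫⁻ y, G x y * u₁ y ^ q ∂σ) + c ^ q * f x := by rw [mul_add]
      _ ≤ (∫⁻ y, G x y * (c * u₁ y) ^ q ∂σ) + f x := by
          rw [key]; exact add_le_add le_rfl (by
            calc c ^ q * f x ≤ 1 * f x := mul_le_mul_left hcq1 _
              _ = f x := one_mul _)
      _ ≤ (∫⁻ y, G x y * u₂ y ^ q ∂σ) + f x := add_le_add hI le_rfl
      _ = u₂ x := h2.symm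
  have upper : ∀ d : ℝ≥0∞, 1 ≤ d → d ≠ ⊤ → (∀ᵐ x ∂σ, u₂ x ≤ d * u₁ x) →
      ∀ᵐ x ∂σ, u₂ x ≤ d ^ q * u₁ x := by
    intro d hd1 hdt h
    have hdq1 : 1 ≤ d ^ q := ENNReal.one_le_rpow hd1 hq0
    have hdqt : d ^ q ≠ ⊤ := by simp [ENNReal.rpow_eq_top_iff, hdt, hq0, hq0.not_gt]
    have hint : ∀ᵐ x ∂σ, (∫⁻ y, G x y * u₂ y ^ q ∂σ) ≤ ∫⁻ y, G x y * (d * u₁ y) ^ q ∂σ := by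
      filter_upwards with x
      refine lintegral_mono_ae ?_
      filter_upwards [h] with y hy
      exact mul_le_mul_right (ENNReal.rpow_le_rpow hy hq0.le) _
    filter_upwards [hsol₁, hsol₂, hint] with x h1 h2 hI
    have key : (∫⁻ y, G x y * (d * u₁ y) ^ q ∂σ) = d ^ q * ∫⁻ y, G x y * u₁ y ^ q ∂σ := by
      rw [← lintegral_const_mul' _ _ hdqt]
      congr 1; ext y
      rw [ENNReal.mul_rpow_of_nonneg _ _ hq0.le]; ring
    calc u₂ x = (∫⁻ y, G x y * u₂ y ^ q ∂σ) + f x := h2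
      _ ≤ (∫⁻ y, G x y * (d * u₁ y) ^ q ∂σ) + f x := add_le_add hI le_rfl
      _ = d ^ q * (∫⁻ y, G x y * u₁ y ^ q ∂σ) + f x := by rw [key]
      _ ≤ d ^ q * (∫⁻ y, G x y * u₁ y ^ q ∂σ) + d ^ q * f x :=
          add_le_add le_rfl (le_mul_of_one_le_left zero_le hdq1)
      _ = d ^ q * u₁ x := by rw [← mul_add, h1]
  -- induction
  have main : ∀ j : ℕ, ∀ᵐ x ∂σ,
      a ^ (q ^ j) * u₁ x ≤ u₂ x ∧ u₂ x ≤ (a⁻¹) ^ (q ^ j) * u₁ x := by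
    intro j
    induction j with
    | zero =>
      filter_upwards [hcomp] with x hx
      simpa using hx
    | succ j ih =>
      have hle1 : a ^ (q ^ j) ≤ 1 := ENNReal.rpow_le_one ha1 (pow_nonneg hq0.le j)
      have hge1 : 1 ≤ (a⁻¹) ^ (q ^ j) :=
        ENNReal.one_le_rpow (ENNReal.one_le_inv.mpr ha1) (pow_pos hq0 j)
      have hit : (a⁻¹) ^ (q ^ j) ≠ ⊤ := by
        simp [ENNReal.rpow_eq_top_iff, hait, hai0, (pow_pos hq0 j).not_gt, (pow_pos hq0 j)]
      have hl := lower _ hle1 ((ih.mono fun x hx => hx.1))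
      have hu := upper _ hge1 hit ((ih.mono fun x hx => hx.2))
      filter_upwards [hl, hu] with x hx1 hx2
      constructor
      · rwa [pow_succ, ENNReal.rpow_mul] 
      · rwa [pow_succ, ENNReal.rpow_mul]
  have hforall : ∀ᵐ x ∂σ, ∀ j : ℕ,
      a ^ (q ^ j) * u₁ x ≤ u₂ x ∧ u₂ x ≤ (a⁻¹) ^ (q ^ j) * u₁ x :=
    ae_all_iff.mpr main
  filter_upwards [hforall, hpos₁] with x hx hx1
  have t1 : Tendsto (fun j : ℕ => a ^ (q ^ j) * u₁ x) atTop (𝓝 (u₁ x)) := by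
    have := ENNReal.Tendsto.mul_const (b := u₁ x) (tendsto_rpow_pow_zero ha0' hat hq0.le hq1) (Or.inl one_ne_zero)
    simpa using this
  have t2 : Tendsto (fun j : ℕ => (a⁻¹) ^ (q ^ j) * u₁ x) atTop (𝓝 (u₁ x)) := by
    have := ENNReal.Tendsto.mul_const (b := u₁ x) (tendsto_rpow_pow_zero hai0 hait hq0.le hq1) (Or.inl one_ne_zero)
    simpa using this
  have h1 : u₁ x ≤ u₂ x := le_of_tendsto t1 (Eventually.of_forall fun j => (hx j).1)
  have h2 : u₂ x ≤ u₁ x := ge_of_tendsto t2 (Eventually.of_forall fun j => (hx j).2)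
  exact le_antisymm h1 h2
end
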